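/- arXiv:math/0512313 — 2 statements merged into one kernel-verified Lean document; each statement's English description precedes it below -/
import Mathlib

section
/- Let 1 ≤ r < p ≤ ∞ and let m : (0,1] → ℂ be continuous. If for every g ∈ AC_r the product mg (extended by (mg)(0) = 0) belongs to AC_p, then m(t) = 0 for all t ∈ (0,1]. In other words, the only multiplier from AC_r to AC_p with r < p is the zero map. -/
/-!
By Hölder's inequality, a function in `AC_p` has increments `O(h ^ (1 - 1/p))` over intervals of
length `h`. Suppose `m t₀ ≠ 0`. Applied to `g(t) = t`, the multiplier shows that `m` itself has
such increments at `t₀`, and in particular tends to `m t₀ ≠ 0`. Then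
`(g t - g t₀) m t = (m g)(t) - (m g)(t₀) - g t₀ (m t - m t₀)` shows that every `g ∈ AC_r` has
increments `O((t₀ - t) ^ (1 - 1/p))` to the left of `t₀`. This fails for the primitive of `(t₀ - s) ^ (-α)` with `1/p < α < 1/r`, whose
increment is `(t₀ - t) ^ (1 - α) / (1 - α)`.
-/

open MeasureTheory Set
open scoped ENNReal NNReal

noncomputable def mu01 : Measure ℝ := volume.restrict (Set.Icc (0 : ℝ) 1)

open Filter Topology Asymptotics

theorem norm_setIntegral_le_eLpNorm_mul_measureReal_rpow {α E : Type*} [MeasurableSpace α]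
    [NormedAddCommGroup E] [NormedSpace ℝ E] {μ : Measure α} {s : Set α} {p : ℝ≥0∞}
    (hp : 1 ≤ p) {f : α → E} (hf : MemLp f p (μ.restrict s)) (hs : μ s ≠ ∞) :
    ‖∫ x in s, f x ∂μ‖ ≤
      (eLpNorm f p (μ.restrict s)).toReal * μ.real s ^ (1 - 1 / p.toReal) := by
  have hHolder := eLpNorm_le_eLpNorm_mul_rpow_measure_univ hp hf.1
  rw [Measure.restrict_apply_univ, ENNReal.toReal_one, div_one] at hHolder
  calc ‖∫ x in s, f x ∂μ‖ ≤ ∫ x in s, ‖f x‖ ∂μ := norm_integral_le_integral_norm f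
    _ = (eLpNorm f 1 (μ.restrict s)).toReal := by
      rw [toReal_eLpNorm hf.1, lpNorm_one_eq_integral_norm hf.1]
    _ ≤ _ := by
      refine (ENNReal.toReal_mono ?_ hHolder).trans_eq ?_
      · refine ENNReal.mul_ne_top hf.2.ne (ENNReal.rpow_ne_top_of_nonneg (sub_nonneg.2 ?_) hs)
        rw [one_div, ← ENNReal.toReal_inv]
        exact ENNReal.toReal_le_of_le_ofReal zero_le_one
          (by simpa using ENNReal.inv_le_one.2 hp)
      · rw [ENNReal.toReal_mul, ← ENNReal.toReal_rpow, measureReal_def]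

theorem setIntegral_Ioc_sub_setIntegral_Ioc {E : Type*} [NormedAddCommGroup E]
    [NormedSpace ℝ E] {f : ℝ → E} {a b c : ℝ} (hab : a ≤ b) (hbc : b ≤ c)
    (hf : IntegrableOn f (Ioc a c)) :
    (∫ x in Ioc a c, f x) - ∫ x in Ioc a b, f x = ∫ x in Ioc b c, f x := by
  have hunion := setIntegral_union (Ioc_disjoint_Ioc_of_le le_rfl) measurableSet_Ioc
    (hf.mono_set (Ioc_subset_Ioc_right hbc)) (hf.mono_set (Ioc_subset_Ioc_left hab))
  rw [Ioc_union_Ioc_eq_Ioc hab hbc] at hunion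
  rw [hunion, add_sub_cancel_left]

theorem tendsto_sub_rpow_nhdsLT {c : ℝ} (hc : 0 < c) (t₀ : ℝ) :
    Tendsto (fun t => (t₀ - t) ^ c) (𝓝[<] t₀) (𝓝 0) := by
  have : ContinuousAt (fun t => (t₀ - t) ^ c) t₀ :=
    (continuousAt_const.sub continuousAt_id).rpow_const (Or.inr hc.le)
  simpa [Real.zero_rpow hc.ne'] using this.tendsto.mono_left nhdsWithin_le_nhds

theorem not_isBigO_sub_rpow_nhdsLT {a b : ℝ} (hab : a < b) (t₀ : ℝ) :
    ¬ (fun t => (t₀ - t) ^ a) =O[𝓝[<] t₀] fun t => (t₀ - t) ^ b := by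
  intro h
  have hpos : ∀ᶠ t in 𝓝[<] t₀, 0 < t₀ - t :=
    eventually_nhdsWithin_of_forall fun t ht => sub_pos.2 ht
  have hsmall : (fun t => (t₀ - t) ^ b) =o[𝓝[<] t₀] fun t => (t₀ - t) ^ a := by
    have := ((isLittleO_one_iff ℝ).2 (tendsto_sub_rpow_nhdsLT (sub_pos.2 hab) t₀)).mul_isBigO
      (isBigO_refl (fun t => (t₀ - t) ^ a) _)
    refine this.congr' ?_ (by simp)
    filter_upwards [hpos] with t ht
    rw [← Real.rpow_add ht, sub_add_cancel]
  refine isLittleO_irrefl ?_ (h.trans_isLittleO hsmall)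
  exact (hpos.mono fun t ht => (Real.rpow_pos_of_pos ht a).ne').frequently

theorem Asymptotics.IsBigO.sub_of_mul_sub {α 𝕜 : Type*} [NormedField 𝕜] {l : Filter α}
    {a b : α → 𝕜} {a₀ b₀ : 𝕜} {h : α → ℝ}
    (hab : (fun x => a x * b x - a₀ * b₀) =O[l] h) (hb : (fun x => b x - b₀) =O[l] h)
    (hb_lim : Tendsto b l (𝓝 b₀)) (hb₀ : b₀ ≠ 0) :
    (fun x => a x - a₀) =O[l] h := by
  have := ((hb_lim.inv₀ hb₀).isBigO_one ℝ).mul (hab.sub (hb.const_mul_left a₀))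
  refine this.congr' ?_ (by simp)
  filter_upwards [hb_lim.eventually_ne hb₀] with x hx
  field_simp
  ring

instance : IsFiniteMeasure mu01 := by unfold mu01; infer_instance

theorem isBigO_sub_rpow_of_eq_setIntegral {E : Type*} [NormedAddCommGroup E]
    [NormedSpace ℝ E] {p : ℝ≥0∞} (hp : 1 ≤ p) {D : ℝ → E} (hD : MemLp D p mu01) {f : ℝ → E}
    (hf : ∀ t ∈ Ioc (0 : ℝ) 1, f t = ∫ s in Ioc 0 t, D s) {t₀ : ℝ} (ht₀ : t₀ ∈ Ioc (0 : ℝ) 1) :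
    (fun t => f t - f t₀) =O[𝓝[<] t₀] fun t => (t₀ - t) ^ (1 - 1 / p.toReal) := by
  refine IsBigO.of_bound (eLpNorm D p mu01).toReal ?_
  filter_upwards [Ioo_mem_nhdsLT ht₀.1] with t ht
  have hle : volume.restrict (Ioc t t₀) ≤ volume.restrict (Icc (0 : ℝ) 1) :=
    Measure.restrict_mono (Ioc_subset_Icc_self.trans (Icc_subset_Icc ht.1.le ht₀.2)) le_rfl
  have hint : IntegrableOn D (Ioc 0 t₀) := (hD.integrable hp).mono_measure
    (Measure.restrict_mono (Ioc_subset_Icc_self.trans (Icc_subset_Icc_right ht₀.2)) le_rfl :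
      _ ≤ volume.restrict (Icc (0 : ℝ) 1))
  rw [hf t ⟨ht.1, ht.2.le.trans ht₀.2⟩, hf t₀ ht₀, ← neg_sub, norm_neg,
    setIntegral_Ioc_sub_setIntegral_Ioc ht.1.le ht.2.le hint]
  have hpow := Real.rpow_nonneg (sub_nonneg.2 ht.2.le) (1 - 1 / p.toReal)
  calc ‖∫ s in Ioc t t₀, D s‖
      ≤ (eLpNorm D p (volume.restrict (Ioc t t₀))).toReal *
          volume.real (Ioc t t₀) ^ (1 - 1 / p.toReal) :=
        norm_setIntegral_le_eLpNorm_mul_measureReal_rpow hp (hD.mono_measure hle)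
          measure_Ioc_lt_top.ne
    _ ≤ (eLpNorm D p mu01).toReal * ‖(t₀ - t) ^ (1 - 1 / p.toReal)‖ := by
        rw [Real.volume_real_Ioc_of_le ht.2.le, Real.norm_of_nonneg hpow]
        exact mul_le_mul_of_nonneg_right
          (ENNReal.toReal_mono hD.2.ne (eLpNorm_mono_measure _ hle)) hpow

theorem memLp_indicator_Ioo_sub_rpow_neg {a b α : ℝ} {r : ℝ≥0∞} (hr₀ : r ≠ 0) (hr : r ≠ ∞)
    (hαr : α * r.toReal < 1) :
    MemLp ((Ioo a b).indicator fun s => (b - s) ^ (-α)) r volume := by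
  have hmeas : Measurable ((Ioo a b).indicator fun s => (b - s) ^ (-α)) :=
    (by fun_prop : Measurable fun s : ℝ => (b - s) ^ (-α)).indicator measurableSet_Ioo
  rw [← integrable_norm_rpow_iff hmeas.aestronglyMeasurable hr₀ hr]
  have hnorm : (fun s => ‖(Ioo a b).indicator (fun s => (b - s) ^ (-α)) s‖ ^ r.toReal)
      = (Ioo a b).indicator fun s => (b - s) ^ (-(α * r.toReal)) := by
    ext s
    by_cases hs : s ∈ Ioo a b
    · have hbs : 0 ≤ b - s := sub_nonneg.2 hs.2.le
      simp only [indicator_of_mem hs, Real.norm_of_nonneg (Real.rpow_nonneg hbs _),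
        ← Real.rpow_mul hbs, neg_mul]
    · simp [indicator_of_notMem hs, Real.zero_rpow (ENNReal.toReal_pos hr₀ hr).ne']
  rw [hnorm, integrable_indicator_iff measurableSet_Ioo]
  have hii := (intervalIntegral.intervalIntegrable_rpow' (a := 0) (b := b - a)
    (r := -(α * r.toReal)) (by linarith)).comp_sub_left b
  simp only [sub_zero, sub_sub_cancel] at hii
  exact hii.symm.1.mono_set Ioo_subset_Ioc_self

theorem setIntegral_Ioc_indicator_sub_rpow_neg {a b t α : ℝ} (hat : a ≤ t) (htb : t ≤ b)
    (hα : α < 1) :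
    ∫ s in Ioc t b, (Ioo a b).indicator (fun u => (b - u) ^ (-α)) s
      = (b - t) ^ (1 - α) / (1 - α) := by
  have hmem : ∀ s ∈ Ioo t b, s ∈ Ioo a b := fun s hs => ⟨hat.trans_lt hs.1, hs.2⟩
  rw [integral_Ioc_eq_integral_Ioo,
    setIntegral_congr_fun measurableSet_Ioo fun s hs => indicator_of_mem (hmem s hs) _,
    ← integral_Ioc_eq_integral_Ioo, ← intervalIntegral.integral_of_le htb,
    intervalIntegral.integral_comp_sub_left (fun y => y ^ (-α)) b, sub_self,
    integral_rpow (Or.inl (by linarith)), Real.zero_rpow (by linarith), neg_add_eq_sub]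
  ring

def IsACMultiplier (r p : ℝ≥0∞) (m : ℝ → ℂ) : Prop :=
  ∀ g g' : ℝ → ℂ, MemLp g' r mu01 → (∀ t ∈ Icc (0 : ℝ) 1, g t = ∫ s in Ioc (0 : ℝ) t, g' s) →
    ∃ D : ℝ → ℂ, MemLp D p mu01 ∧
      ∀ t ∈ Icc (0 : ℝ) 1, (if t = 0 then 0 else m t * g t) = ∫ s in Ioc (0 : ℝ) t, D s

namespace IsACMultiplier

variable {r p : ℝ≥0∞} {m : ℝ → ℂ} {t₀ : ℝ}

theorem isBigO_mul_sub (hm : IsACMultiplier r p m) (hp : 1 ≤ p) (ht₀ : t₀ ∈ Ioc (0 : ℝ) 1)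
    {g g' : ℝ → ℂ} (hg' : MemLp g' r mu01)
    (hg : ∀ t ∈ Icc (0 : ℝ) 1, g t = ∫ s in Ioc 0 t, g' s) :
    (fun t => m t * g t - m t₀ * g t₀) =O[𝓝[<] t₀] fun t => (t₀ - t) ^ (1 - 1 / p.toReal) := by
  obtain ⟨D, hD, hmg⟩ := hm g g' hg' hg
  refine isBigO_sub_rpow_of_eq_setIntegral hp hD (fun t ht => ?_) ht₀
  simpa [ht.1.ne'] using hmg t (Ioc_subset_Icc_self ht)

theorem isBigO_sub (hm : IsACMultiplier r p m) (hp : 1 ≤ p) (ht₀ : t₀ ∈ Ioc (0 : ℝ) 1) :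
    (fun t => m t - m t₀) =O[𝓝[<] t₀] fun t => (t₀ - t) ^ (1 - 1 / p.toReal) := by
  have hid : ∀ t ∈ Icc (0 : ℝ) 1, ((t : ℝ) : ℂ) = ∫ s in Ioc 0 t, (1 : ℂ) := fun t ht => by
    simp [Real.volume_real_Ioc_of_le ht.1]
  exact (hm.isBigO_mul_sub hp ht₀ (memLp_const 1) hid).sub_of_mul_sub
    (isBigO_sub_rpow_of_eq_setIntegral hp (memLp_const 1)
      (fun t ht => hid t (Ioc_subset_Icc_self ht)) ht₀)
    (Complex.continuous_ofReal.tendsto t₀ |>.mono_left nhdsWithin_le_nhds)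
    (Complex.ofReal_ne_zero.2 ht₀.1.ne')

end IsACMultiplier

theorem exists_lt_one_div_toReal_mul_lt {r p : ℝ≥0∞} (hr : 1 ≤ r) (hrp : r < p) :
    ∃ α : ℝ, 1 / p.toReal < α ∧ α * r.toReal < 1 ∧ α < 1 := by
  have hr₀ : r ≠ 0 := (zero_lt_one.trans_le hr).ne'
  have hpr : 1 / p.toReal < 1 / r.toReal := by
    simp only [one_div, ← ENNReal.toReal_inv]
    exact ENNReal.toReal_strict_mono (ENNReal.inv_ne_top.2 hr₀) (ENNReal.inv_lt_inv.2 hrp)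
  obtain ⟨α, hpα, hαr⟩ := exists_between hpr
  have hr_one : 1 ≤ r.toReal := by simpa using ENNReal.toReal_mono hrp.ne_top hr
  exact ⟨α, hpα, (lt_div_iff₀ (by linarith)).1 hαr,
    hαr.trans_le (div_le_one_of_le₀ hr_one (by positivity))⟩

theorem multiplier_ACr_ACp_zero_of_lt_general
    (r p : ℝ≥0∞) (hr : 1 ≤ r) (hrp : r < p)
    (m : ℝ → ℂ)
    (hmult : ∀ g g' : ℝ → ℂ, MemLp g' r mu01 →
      (∀ t ∈ Set.Icc (0 : ℝ) 1, g t = ∫ s in Set.Ioc (0 : ℝ) t, g' s) →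
      ∃ D : ℝ → ℂ, MemLp D p mu01 ∧
        ∀ t ∈ Set.Icc (0 : ℝ) 1,
          (if t = 0 then 0 else m t * g t) = ∫ s in Set.Ioc (0 : ℝ) t, D s) :
    ∀ t ∈ Set.Ioc (0 : ℝ) 1, m t = 0 := by
  intro t₀ ht₀
  by_contra hm₀
  have hp : 1 ≤ p := hr.trans hrp.le
  obtain ⟨α, hpα, hαr, hα1⟩ := exists_lt_one_div_toReal_mul_lt hr hrp
  have hm := IsACMultiplier.isBigO_sub hmult hp ht₀
  have hm_lim : Tendsto m (𝓝[<] t₀) (𝓝 (m t₀)) :=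
    tendsto_sub_nhds_zero_iff.1 (hm.trans_tendsto (tendsto_sub_rpow_nhdsLT (by linarith) t₀))
  let g' : ℝ → ℂ := fun s => (((Ioo 0 t₀).indicator (fun u => (t₀ - u) ^ (-α)) s : ℝ) : ℂ)
  have hg'_memLp : MemLp g' r mu01 :=
    (memLp_indicator_Ioo_sub_rpow_neg (zero_lt_one.trans_le hr).ne' hrp.ne_top
      hαr).ofReal.mono_measure (Measure.restrict_le_self : _ ≤ volume)
  have hg'_int : Integrable g' :=
    memLp_one_iff_integrable.1 (memLp_indicator_Ioo_sub_rpow_neg one_ne_zero ENNReal.one_ne_top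
      (by simpa using hα1)).ofReal
  let g : ℝ → ℂ := fun t => ∫ s in Ioc 0 t, g' s
  have hg : (fun t => g t - g t₀) =O[𝓝[<] t₀] fun t => (t₀ - t) ^ (1 - 1 / p.toReal) :=
    ((IsACMultiplier.isBigO_mul_sub hmult hp ht₀ hg'_memLp fun _ _ => rfl).congr_left
      fun t => by ring).sub_of_mul_sub hm hm_lim hm₀
  have hg_incr : ∀ᶠ t in 𝓝[<] t₀, (1 - α) * ‖g t - g t₀‖ = (t₀ - t) ^ (1 - α) := by
    filter_upwards [Ioo_mem_nhdsLT ht₀.1] with t ht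
    rw [norm_sub_rev, setIntegral_Ioc_sub_setIntegral_Ioc ht.1.le ht.2.le hg'_int.integrableOn]
    simp only [g']
    rw [integral_complex_ofReal, setIntegral_Ioc_indicator_sub_rpow_neg ht.1.le ht.2.le hα1,
      Complex.norm_real, Real.norm_of_nonneg (by have := sub_pos.2 ht.2; positivity),
      mul_div_cancel₀ _ (sub_pos.2 hα1).ne']
  exact not_isBigO_sub_rpow_nhdsLT (show 1 - α < 1 - 1 / p.toReal by linarith) t₀
    ((hg.norm_left.const_mul_left (1 - α)).congr' hg_incr EventuallyEq.rfl)

/-- Theorem 4.  Let `1 ≤ r < p ≤ ∞` and let `m` be continuous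
on `(0,1]`.  If for every `g ∈ AC_r` the product `mg` (extended by
`(mg)(0) = 0`) belongs to `AC_p`, then `m = 0` on `(0,1]`: the only multiplier
from `AC_r` to `AC_p` with `r < p` is the zero map. -/
theorem multiplier_ACr_ACp_zero_of_lt
    (r p : ℝ≥0∞) (hr : 1 ≤ r) (hrp : r < p)
    (m : ℝ → ℂ)
    (hmc : ContinuousOn m (Set.Ioc (0 : ℝ) 1))
    (hmult : ∀ g g' : ℝ → ℂ, MemLp g' r mu01 →
      (∀ t ∈ Set.Icc (0 : ℝ) 1, g t = ∫ s in Set.Ioc (0 : ℝ) t, g' s) →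
      ∃ D : ℝ → ℂ, MemLp D p mu01 ∧
        ∀ t ∈ Set.Icc (0 : ℝ) 1,
          (if t = 0 then 0 else m t * g t) = ∫ s in Set.Ioc (0 : ℝ) t, D s) :
    ∀ t ∈ Set.Ioc (0 : ℝ) 1, m t = 0 :=
  multiplier_ACr_ACp_zero_of_lt_general r p hr hrp m hmult
end

section
/- Let r > p > 1 and define v by 1/v = 1/p − 1/r. Let m : (0,1] → ℂ be continuous with m ∈ L^v(0,1], and suppose there is a measurable function m' on (0,1] with m(t) = m(1) − ∫_t^1 m'(s) ds for all t ∈ (0,1], m'·χ_{[ε,1]} ∈ L^p for every ε ∈ (0,1], and Σ_{n=1}^∞ (2^{−n/r'} ‖P_n m'‖_p)^p < ∞, where P_n m' = m'·χ_{(2^{−n}, 2^{−n+1}]}. Then for every g ∈ AC_r the product mg (extended by (mg)(0) = 0) belongs to AC_p; that is, m defines a multiplier from AC_r to AC_p. -/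
/-!
By Hölder, a function `g ∈ AC_r` satisfies `‖g s‖ ≤ ‖g'‖_r s^{1/r'}`. On the dyadic block
`(2^{-(n+1)}, 2^{-n}]` the term `m' g` therefore has `L^p` norm at most a constant times
`2^{-(n+1)/r'} ‖P_{n+1} m'‖_p`, so the summability hypothesis puts `m' g` in `L^p`; and `m g' ∈ L^p`
by Hölder with `1/p = 1/v + 1/r`. For `D = m' g + m g'` the product rule for absolutely continuous
functions gives `m t g t - m a g a = ∫_{(a,t]} D` for `0 < a < t`, so `m a g a` has a limit `L`
as `a → 0⁺`. If `L ≠ 0` then `‖m a‖ ≳ a^{-1/r'}` near `0`, which is not in `L^v` because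
`v / r' > 1` (equivalently `1/v < 1 - 1/r`). Hence `L = 0`, i.e. `m t g t = ∫_{(0,t]} D`.
-/

open MeasureTheory Set
open scoped ENNReal NNReal

open Filter Topology

theorem one_lt_toReal_inv_mul_toReal {p r v q : ℝ≥0∞} (hp : 1 < p) (hvT : v ≠ ⊤)
    (hvr : v⁻¹ + r⁻¹ = p⁻¹) (hq : r⁻¹ + q⁻¹ = 1) : 1 < (q⁻¹).toReal * v.toReal := by
  have hpinv : p⁻¹ < 1 := ENNReal.inv_lt_one.2 hp
  have hr : r⁻¹ ≠ ⊤ := ((le_add_self.trans_eq hvr).trans_lt (hpinv.trans ENNReal.one_lt_top)).ne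
  have hvq : v⁻¹ < q⁻¹ := by
    rw [← hq, add_comm] at hpinv
    exact (ENNReal.add_lt_add_iff_right hr).1 (hvr.trans_lt hpinv)
  have hv0 : v ≠ 0 := ENNReal.inv_ne_top.1 (hvq.trans_le le_top).ne
  have hqT : q⁻¹ ≠ ⊤ := ((le_add_self.trans_eq hq).trans_lt ENNReal.one_lt_top).ne
  rw [mul_comm, ← ENNReal.toReal_mul, ← ENNReal.toReal_one]
  refine (ENNReal.toReal_lt_toReal ENNReal.one_ne_top (ENNReal.mul_ne_top hvT hqT)).2 ?_
  calc (1 : ℝ≥0∞) = v * v⁻¹ := (ENNReal.mul_inv_cancel hv0 hvT).symm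
    _ < v * q⁻¹ := ENNReal.mul_lt_mul_right hv0 hvT hvq

theorem enorm_setIntegral_le_eLpNorm_mul_measure_rpow {α E : Type*} [MeasurableSpace α]
    [NormedAddCommGroup E] [NormedSpace ℝ E] {μ : Measure α} {r q : ℝ≥0∞}
    (hrq : r⁻¹ + q⁻¹ = 1) {g : α → E} (hg : AEStronglyMeasurable g μ) (s : Set α) :
    ‖∫ x in s, g x ∂μ‖ₑ ≤ eLpNorm g r μ * μ s ^ (q⁻¹).toReal := by
  have hr : 1 ≤ r := ENNReal.inv_le_one.1 (le_self_add.trans_eq hrq)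
  have hθ : 1 / (1 : ℝ≥0∞).toReal - 1 / r.toReal = (q⁻¹).toReal := by
    have hfin : ∀ x : ℝ≥0∞, x ≤ 1 → x ≠ ⊤ := fun x hx => (hx.trans_lt ENNReal.one_lt_top).ne
    have := congrArg ENNReal.toReal hrq
    rw [ENNReal.toReal_add (hfin _ (le_self_add.trans_eq hrq)) (hfin _ (le_add_self.trans_eq hrq)),
      ENNReal.toReal_inv] at this
    simp only [ENNReal.toReal_one, one_div] at this ⊢
    linarith
  calc ‖∫ x in s, g x ∂μ‖ₑ ≤ eLpNorm g 1 (μ.restrict s) :=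
        (enorm_integral_le_lintegral_enorm _).trans_eq eLpNorm_one_eq_lintegral_enorm.symm
    _ ≤ eLpNorm g r (μ.restrict s) * μ s ^ (q⁻¹).toReal := by
        have := eLpNorm_le_eLpNorm_mul_rpow_measure_univ hr (hg.restrict (s := s))
        rwa [hθ, Measure.restrict_apply_univ] at this
    _ ≤ eLpNorm g r μ * μ s ^ (q⁻¹).toReal := by
        gcongr
        exact Measure.restrict_le_self

section Primitive

variable {E : Type*} [NormedAddCommGroup E] [NormedSpace ℝ E] {f : ℝ → E} {F : ℝ → E}
  {a b c : ℝ}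

theorem setIntegral_Ioc_add_setIntegral_Ioc (hab : a ≤ b) (hbc : b ≤ c)
    (hf : IntegrableOn f (Ioc a c)) :
    (∫ x in Ioc a b, f x) + ∫ x in Ioc b c, f x = ∫ x in Ioc a c, f x := by
  rw [← setIntegral_union (Ioc_disjoint_Ioc_of_le le_rfl) measurableSet_Ioc
    (hf.mono_set (Ioc_subset_Ioc_right hbc)) (hf.mono_set (Ioc_subset_Ioc_left hab)),
    Ioc_union_Ioc_eq_Ioc hab hbc]

theorem continuousOn_setIntegral_Ioc (hf : IntegrableOn f (Ioc a b)) :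
    ContinuousOn (fun x => ∫ y in Ioc a x, f y) (Icc a b) := by
  rcases le_or_gt a b with hab | hba
  · have h := intervalIntegral.continuousOn_primitive_interval (μ := volume) (f := f)
      (by rwa [uIcc_of_le hab, integrableOn_Icc_iff_integrableOn_Ioc])
    rw [uIcc_of_le hab] at h
    exact h.congr fun x hx => (intervalIntegral.integral_of_le hx.1).symm
  · simp [Icc_eq_empty_of_lt hba]

theorem tendsto_setIntegral_Ioc_nhdsGT (hab : a < b) (hf : IntegrableOn f (Ioc a b)) :
    Tendsto (fun x => ∫ y in Ioc x b, f y) (𝓝[>] a) (𝓝 (∫ y in Ioc a b, f y)) := by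
  have h := intervalIntegral.continuousOn_primitive_interval_left (μ := volume) (f := f)
    (by rwa [uIcc_of_le hab.le, integrableOn_Icc_iff_integrableOn_Ioc])
  rw [uIcc_of_le hab.le] at h
  have h' := ((h a (left_mem_Icc.2 hab.le)).mono_of_mem_nhdsWithin (Icc_mem_nhdsGT hab)).tendsto
  rw [intervalIntegral.integral_of_le hab.le] at h'
  refine h'.congr' ?_
  filter_upwards [Ioo_mem_nhdsGT hab] with x hx
  exact intervalIntegral.integral_of_le hx.2.le

theorem eq_add_setIntegral_Ioc_of_eq_sub (hf : IntegrableOn f (Ioc a b))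
    (hF : ∀ x ∈ Icc a b, F x = F b - ∫ y in Ioc x b, f y) :
    ∀ x ∈ Icc a b, F x = F a + ∫ y in Ioc a x, f y := by
  intro x hx
  rw [hF x hx, hF a (left_mem_Icc.2 (hx.1.trans hx.2)),
    ← setIntegral_Ioc_add_setIntegral_Ioc hx.1 hx.2 hf]
  abel

theorem eq_add_setIntegral_Ioc_of_eq_setIntegral_Ioc (hf : IntegrableOn f (Ioc c b))
    (hF : ∀ x ∈ Icc c b, F x = ∫ y in Ioc c x, f y) (ha : a ∈ Icc c b) :
    ∀ x ∈ Icc a b, F x = F a + ∫ y in Ioc a x, f y := by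
  intro x hx
  rw [hF x ⟨ha.1.trans hx.1, hx.2⟩, hF a ha,
    setIntegral_Ioc_add_setIntegral_Ioc ha.1 hx.1 (hf.mono_set (Ioc_subset_Ioc_right hx.2))]

end Primitive

section IntegrationByParts

variable {𝕜 : Type*} [RCLike 𝕜] {f h F H : ℝ → 𝕜} {a b : ℝ}

theorem setIntegral_Ioc_mul_setIntegral_Ioc_swap (hf : IntegrableOn f (Ioc a b))
    (hh : IntegrableOn h (Ioc a b)) :
    ∫ x in Ioc a b, f x * ∫ y in Ioc x b, h y = ∫ y in Ioc a b, (∫ x in Ioc a y, f x) * h y := by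
  set μ := volume.restrict (Ioc a b)
  set φ : ℝ → ℝ → 𝕜 := fun x y =>
    {z : ℝ × ℝ | z.1 < z.2}.indicator (fun z => f z.1 * h z.2) (x, y)
  have hφ : Integrable (Function.uncurry φ) (μ.prod μ) :=
    (hf.mul_prod hh).indicator (measurableSet_lt measurable_fst measurable_snd)
  have inner_left : ∀ x ∈ Ioc a b, ∫ y, φ x y ∂μ = f x * ∫ y in Ioc x b, h y := by
    intro x hx
    have : ∀ y, φ x y = f x * (Ioi x).indicator h y := fun y => by
      by_cases hxy : x < y <;> simp [φ, hxy]
    simp_rw [this, integral_const_mul, integral_indicator measurableSet_Ioi, μ,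
      Measure.restrict_restrict measurableSet_Ioi]
    congr 3
    ext y
    simp only [mem_inter_iff, mem_Ioi, mem_Ioc]
    constructor
    · rintro ⟨hxy, -, hyb⟩; exact ⟨hxy, hyb⟩
    · rintro ⟨hxy, hyb⟩; exact ⟨hxy, hx.1.trans hxy, hyb⟩
  have inner_right : ∀ y ∈ Ioc a b, ∫ x, φ x y ∂μ = (∫ x in Ioc a y, f x) * h y := by
    intro y hy
    have : ∀ x, φ x y = (Iio y).indicator f x * h y := fun x => by
      by_cases hxy : x < y <;> simp [φ, hxy]
    simp_rw [this, integral_mul_const, integral_indicator measurableSet_Iio, μ,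
      Measure.restrict_restrict measurableSet_Iio, ← setIntegral_congr_set Ioo_ae_eq_Ioc]
    congr 3
    ext x
    simp only [mem_inter_iff, mem_Iio, mem_Ioc, mem_Ioo]
    constructor
    · rintro ⟨hxy, hax, -⟩; exact ⟨hax, hxy⟩
    · rintro ⟨hax, hxy⟩; exact ⟨hxy, hax, hxy.le.trans hy.2⟩
  calc ∫ x in Ioc a b, f x * ∫ y in Ioc x b, h y = ∫ x, ∫ y, φ x y ∂μ ∂μ :=
        setIntegral_congr_fun measurableSet_Ioc fun x hx => (inner_left x hx).symm
    _ = ∫ y, ∫ x, φ x y ∂μ ∂μ := integral_integral_swap hφ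
    _ = _ := setIntegral_congr_fun measurableSet_Ioc inner_right

theorem setIntegral_Ioc_mul_add_mul_eq_sub (hab : a ≤ b)
    (hf : IntegrableOn f (Ioc a b)) (hh : IntegrableOn h (Ioc a b))
    (hF : ∀ x ∈ Icc a b, F x = F a + ∫ y in Ioc a x, f y)
    (hH : ∀ x ∈ Icc a b, H x = H a + ∫ y in Ioc a x, h y) :
    ∫ x in Ioc a b, (f x * H x + F x * h x) = F b * H b - F a * H a := by
  have hFc : ContinuousOn F (Icc a b) :=
    (continuous_const.continuousOn.add (continuousOn_setIntegral_Ioc hf)).congr hF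
  have hHc : ContinuousOn H (Icc a b) :=
    (continuous_const.continuousOn.add (continuousOn_setIntegral_Ioc hh)).congr hH
  have hfH : IntegrableOn (fun x => f x * H x) (Ioc a b) :=
    hf.mul_continuousOn_of_subset hHc measurableSet_Ioc isCompact_Icc Ioc_subset_Icc_self
  have hFh : IntegrableOn (fun x => F x * h x) (Ioc a b) :=
    hh.continuousOn_mul_of_subset hFc isCompact_Icc measurableSet_Ioc Ioc_subset_Icc_self
  -- Write `H x = H b - ∫_{(x,b]} h`; Fubini turns `∫ f(x) ∫_{(x,b]} h` into `∫ (F - F a) h`.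
  have hH_sub : ∀ x ∈ Ioc a b, f x * H x = f x * H b - f x * ∫ y in Ioc x b, h y := by
    intro x hx
    rw [hH b (right_mem_Icc.2 hab), hH x (Ioc_subset_Icc_self hx),
      ← setIntegral_Ioc_add_setIntegral_Ioc hx.1.le hx.2 hh]
    ring
  have hF_sub : ∀ y ∈ Ioc a b, (∫ x in Ioc a y, f x) * h y = F y * h y - F a * h y := by
    intro y hy
    rw [hF y (Ioc_subset_Icc_self hy)]
    ring
  have hfJ : IntegrableOn (fun x => f x * ∫ y in Ioc x b, h y) (Ioc a b) :=
    IntegrableOn.congr_fun ((hf.mul_const (H b)).sub hfH)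
      (fun x hx => by simp only [Pi.sub_apply, hH_sub x hx]; ring) measurableSet_Ioc
  have hfb : ∫ x in Ioc a b, f x = F b - F a := by rw [hF b (right_mem_Icc.2 hab)]; ring
  have hhb : ∫ x in Ioc a b, h x = H b - H a := by rw [hH b (right_mem_Icc.2 hab)]; ring
  have efH : ∫ x in Ioc a b, f x * H x
      = (∫ x in Ioc a b, f x) * H b - ∫ x in Ioc a b, f x * ∫ y in Ioc x b, h y := by
    rw [setIntegral_congr_fun measurableSet_Ioc hH_sub, integral_sub (hf.mul_const _) hfJ,
      integral_mul_const]
  have efJ : ∫ x in Ioc a b, f x * ∫ y in Ioc x b, h y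
      = (∫ x in Ioc a b, F x * h x) - F a * ∫ x in Ioc a b, h x := by
    rw [setIntegral_Ioc_mul_setIntegral_Ioc_swap hf hh,
      setIntegral_congr_fun measurableSet_Ioc hF_sub, integral_sub hFh (hh.const_mul _),
      integral_const_mul]
  rw [integral_add hfH hFh, efH, efJ, hfb, hhb]
  ring

end IntegrationByParts

section UnitInterval

instance isFiniteMeasure_mu01 : IsFiniteMeasure mu01 :=
  isFiniteMeasure_restrict.2 measure_Icc_lt_top.ne

theorem mu01_restrict_of_subset {s : Set ℝ} (hs : s ⊆ Icc 0 1) :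
    mu01.restrict s = volume.restrict s :=
  Measure.restrict_restrict_of_subset hs

theorem integrableOn_of_integrable_mu01 {E : Type*} [NormedAddCommGroup E] {f : ℝ → E}
    (hf : Integrable f mu01) {s : Set ℝ} (hs : s ⊆ Icc 0 1) : IntegrableOn f s := by
  rw [IntegrableOn, ← mu01_restrict_of_subset hs]
  exact hf.restrict

theorem norm_setIntegral_Ioc_zero_le_mul_rpow {E : Type*} [NormedAddCommGroup E]
    [NormedSpace ℝ E] {r q : ℝ≥0∞} (hrq : r⁻¹ + q⁻¹ = 1) {g : ℝ → E} (hg : MemLp g r mu01)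
    {s : ℝ} (hs : s ∈ Icc 0 1) :
    ‖∫ x in Ioc 0 s, g x‖ ≤ (eLpNorm g r mu01).toReal * s ^ (q⁻¹).toReal := by
  have hsub : Ioc 0 s ⊆ Icc 0 1 := Ioc_subset_Icc_self.trans (Icc_subset_Icc_right hs.2)
  have hμs : mu01 (Ioc 0 s) = ENNReal.ofReal s := by
    rw [← Measure.restrict_apply_univ, mu01_restrict_of_subset hsub, Measure.restrict_apply_univ,
      Real.volume_Ioc, sub_zero]
  have h := enorm_setIntegral_le_eLpNorm_mul_measure_rpow hrq hg.1 (Ioc 0 s)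
  rw [mu01_restrict_of_subset hsub, hμs] at h
  have hfin : eLpNorm g r mu01 * ENNReal.ofReal s ^ (q⁻¹).toReal ≠ ⊤ := ENNReal.mul_ne_top hg.2.ne
    (ENNReal.rpow_ne_top_of_nonneg ENNReal.toReal_nonneg ENNReal.ofReal_ne_top)
  simpa [ENNReal.toReal_mul, ← ENNReal.toReal_rpow, ENNReal.toReal_ofReal hs.1] using
    ENNReal.toReal_mono hfin h

theorem mul_sub_mul_eq_setIntegral_Ioc {𝕜 : Type*} [RCLike 𝕜] {m m' g g' : ℝ → 𝕜}
    {p : ℝ≥0∞} (hp : 1 ≤ p) {a t : ℝ} (ha : 0 < a) (hat : a ≤ t) (ht : t ≤ 1)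
    (hm' : MemLp ((Icc a 1).indicator m') p mu01) (hg' : IntegrableOn g' (Ioc 0 1))
    (hm : ∀ x ∈ Ioc 0 1, m x = m 1 - ∫ y in Ioc x 1, m' y)
    (hg : ∀ x ∈ Icc 0 1, g x = ∫ y in Ioc 0 x, g' y) :
    m t * g t - m a * g a = ∫ x in Ioc a t, (m' x * g x + m x * g' x) := by
  have hm'a : IntegrableOn m' (Ioc a 1) :=
    ((integrableOn_of_integrable_mu01 (hm'.integrable hp) (Icc_subset_Icc_left ha.le)).congr_fun
      (fun x hx => indicator_of_mem hx m') measurableSet_Icc).mono_set Ioc_subset_Icc_self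
  have hma := eq_add_setIntegral_Ioc_of_eq_sub hm'a fun x hx => hm x ⟨ha.trans_le hx.1, hx.2⟩
  have hga := eq_add_setIntegral_Ioc_of_eq_setIntegral_Ioc hg' hg ⟨ha.le, hat.trans ht⟩
  exact (setIntegral_Ioc_mul_add_mul_eq_sub hat (hm'a.mono_set (Ioc_subset_Ioc_right ht))
    (hg'.mono_set (Ioc_subset_Ioc ha.le ht)) (fun x hx => hma x ⟨hx.1, hx.2.trans ht⟩)
    (fun x hx => hga x ⟨hx.1, hx.2.trans ht⟩)).symm

end UnitInterval

section Dyadic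

/-- `dyadicIoc n = (2^{-(n+1)}, 2^{-n}]` is the support of the paper's `P_{n+1}`. -/
def dyadicIoc (n : ℕ) : Set ℝ := Ioc ((2 : ℝ) ^ (-((n : ℝ) + 1))) ((2 : ℝ) ^ (-(n : ℝ)))

theorem dyadicIoc_eq (n : ℕ) : dyadicIoc n = Ioc (2⁻¹ ^ (n + 1)) (2⁻¹ ^ n) := by
  have h (k : ℕ) : (2 : ℝ) ^ (-(k : ℝ)) = 2⁻¹ ^ k := by
    rw [Real.rpow_neg zero_le_two, Real.rpow_natCast, inv_pow]
  rw [dyadicIoc, ← h, ← h]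
  push_cast
  rfl

theorem dyadicIoc_subset_Ioc (n : ℕ) : dyadicIoc n ⊆ Ioc 0 1 := by
  rw [dyadicIoc_eq]
  exact Ioc_subset_Ioc (by positivity) (pow_le_one₀ (by norm_num) (by norm_num))

theorem pairwise_disjoint_dyadicIoc : Pairwise (Function.onFun Disjoint dyadicIoc) := by
  have := (pow_right_anti₀ (by norm_num : (0 : ℝ) ≤ 2⁻¹) (by norm_num))
    |>.pairwise_disjoint_on_Ioc_succ
  simpa only [Order.succ_eq_add_one, ← dyadicIoc_eq] using this

theorem iUnion_dyadicIoc : ⋃ n, dyadicIoc n = Ioc 0 1 := by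
  refine (iUnion_subset dyadicIoc_subset_Ioc).antisymm fun x hx => mem_iUnion.2 ?_
  obtain ⟨n, hn, hn'⟩ := exists_nat_pow_near (one_le_inv_iff₀.2 hx) (by norm_num : (1 : ℝ) < 2)
  refine ⟨n, ?_⟩
  rw [dyadicIoc_eq, inv_pow, inv_pow, mem_Ioc, inv_lt_comm₀ (by positivity) hx.1,
    le_inv_comm₀ hx.1 (by positivity)]
  exact ⟨hn', hn⟩

theorem rpow_le_of_mem_dyadicIoc {θ s : ℝ} {n : ℕ} (hθ : 0 ≤ θ) (hs : s ∈ dyadicIoc n) :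
    s ^ θ ≤ 2 ^ θ * (2 : ℝ) ^ (-((n : ℝ) + 1) * θ) := by
  calc s ^ θ ≤ ((2 : ℝ) ^ (-(n : ℝ))) ^ θ :=
        Real.rpow_le_rpow (dyadicIoc_subset_Ioc n hs).1.le hs.2 hθ
    _ = 2 ^ θ * (2 : ℝ) ^ (-((n : ℝ) + 1) * θ) := by
        rw [← Real.rpow_mul zero_le_two, ← Real.rpow_add zero_lt_two]
        ring_nf

theorem eLpNorm_rpow_toReal_eq_lintegral {α F : Type*} [MeasurableSpace α]
    [NormedAddCommGroup F] {μ : Measure α} {p : ℝ≥0∞} (hp0 : p ≠ 0) (hpT : p ≠ ⊤) (f : α → F) :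
    eLpNorm f p μ ^ p.toReal = ∫⁻ x, ‖f x‖ₑ ^ p.toReal ∂μ := by
  rw [eLpNorm_eq_lintegral_rpow_enorm_toReal hp0 hpT, ← ENNReal.rpow_mul, one_div,
    inv_mul_cancel₀ (ENNReal.toReal_pos hp0 hpT).ne', ENNReal.rpow_one]

theorem eLpNorm_indicator_iUnion_rpow_toReal {α ι F : Type*} [MeasurableSpace α] [Countable ι]
    [NormedAddCommGroup F] {μ : Measure α} {p : ℝ≥0∞} (hp0 : p ≠ 0) (hpT : p ≠ ⊤)
    {s : ι → Set α} (hs : ∀ i, MeasurableSet (s i)) (hd : Pairwise (Function.onFun Disjoint s))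
    (f : α → F) :
    eLpNorm ((⋃ i, s i).indicator f) p μ ^ p.toReal
      = ∑' i, eLpNorm ((s i).indicator f) p μ ^ p.toReal := by
  simp_rw [eLpNorm_indicator_eq_eLpNorm_restrict (MeasurableSet.iUnion hs),
    eLpNorm_indicator_eq_eLpNorm_restrict (hs _), eLpNorm_rpow_toReal_eq_lintegral hp0 hpT]
  exact lintegral_iUnion hs hd _

variable {R : Type*} [NormedRing R] {μ : Measure ℝ} {f u : ℝ → R} {p : ℝ≥0∞} {θ C : ℝ}

theorem eLpNorm_indicator_dyadicIoc_mul_le (hθ : 0 ≤ θ) (hC : 0 ≤ C)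
    (hu : ∀ s ∈ Ioc (0 : ℝ) 1, ‖u s‖ ≤ C * s ^ θ) (n : ℕ) :
    eLpNorm ((dyadicIoc n).indicator fun s => f s * u s) p μ
      ≤ ENNReal.ofReal (C * 2 ^ θ) * (ENNReal.ofReal ((2 : ℝ) ^ (-((n : ℝ) + 1) * θ)) *
        eLpNorm ((dyadicIoc n).indicator f) p μ) := by
  rw [← mul_assoc, ← ENNReal.ofReal_mul (by positivity)]
  refine eLpNorm_le_mul_eLpNorm_of_ae_le_mul (Eventually.of_forall fun s => ?_) p
  by_cases hs : s ∈ dyadicIoc n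
  · simp only [indicator_of_mem hs]
    calc ‖f s * u s‖ ≤ ‖f s‖ * (C * s ^ θ) :=
          (norm_mul_le _ _).trans (by gcongr; exact hu s (dyadicIoc_subset_Ioc n hs))
      _ ≤ ‖f s‖ * (C * (2 ^ θ * (2 : ℝ) ^ (-((n : ℝ) + 1) * θ))) := by
          gcongr; exact rpow_le_of_mem_dyadicIoc hθ hs
      _ = _ := by ring
  · simp [indicator_of_notMem hs]

theorem memLp_indicator_Ioc_mul_of_tsum_lt_top (hp0 : p ≠ 0) (hpT : p ≠ ⊤) (hθ : 0 ≤ θ)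
    (hfu : AEStronglyMeasurable (fun s => f s * u s) μ)
    (hu : ∀ s ∈ Ioc (0 : ℝ) 1, ‖u s‖ ≤ C * s ^ θ)
    (hsum : ∑' n : ℕ, (ENNReal.ofReal ((2 : ℝ) ^ (-((n : ℝ) + 1) * θ)) *
      eLpNorm ((dyadicIoc n).indicator f) p μ) ^ p.toReal < ⊤) :
    MemLp ((Ioc 0 1).indicator fun s => f s * u s) p μ := by
  have hC : 0 ≤ C := by simpa using (norm_nonneg _).trans (hu 1 ⟨one_pos, le_rfl⟩)
  have hpt : 0 < p.toReal := ENNReal.toReal_pos hp0 hpT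
  refine ⟨hfu.indicator measurableSet_Ioc, ?_⟩
  rw [← ENNReal.rpow_lt_top_iff_of_pos hpt, ← iUnion_dyadicIoc,
    eLpNorm_indicator_iUnion_rpow_toReal hp0 hpT (s := dyadicIoc) (fun _ => measurableSet_Ioc)
      pairwise_disjoint_dyadicIoc]
  calc ∑' n, eLpNorm ((dyadicIoc n).indicator fun s => f s * u s) p μ ^ p.toReal
      ≤ ∑' n : ℕ, ENNReal.ofReal (C * 2 ^ θ) ^ p.toReal *
        (ENNReal.ofReal ((2 : ℝ) ^ (-((n : ℝ) + 1) * θ)) *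
          eLpNorm ((dyadicIoc n).indicator f) p μ) ^ p.toReal := by
        gcongr with n
        rw [← ENNReal.mul_rpow_of_nonneg _ _ hpt.le]
        gcongr
        exact eLpNorm_indicator_dyadicIoc_mul_le hθ hC hu n
    _ < ⊤ := by
        rw [ENNReal.tsum_mul_left]
        exact ENNReal.mul_lt_top (ENNReal.rpow_lt_top_of_nonneg hpt.le ENNReal.ofReal_ne_top) hsum

end Dyadic

section Singularity

variable {R : Type*} [NormedRing R] {m u : ℝ → R} {v θ : ℝ}

theorem not_integrableOn_norm_rpow_of_mul_rpow_neg_le {c δ : ℝ} (hv : 0 < v) (hθv : 1 ≤ θ * v)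
    (hc : 0 < c) (hδ : 0 < δ) (hm : ∀ a ∈ Ioo 0 δ, c * a ^ (-θ) ≤ ‖m a‖) :
    ¬IntegrableOn (fun a => ‖m a‖ ^ v) (Ioo 0 δ) := by
  intro hint
  have hbound : ∀ a ∈ Ioo 0 δ, a ^ (-(θ * v)) ≤ (c ^ v)⁻¹ * ‖m a‖ ^ v := by
    intro a ha
    rw [le_inv_mul_iff₀ (Real.rpow_pos_of_pos hc v), ← neg_mul, Real.rpow_mul ha.1.le,
      ← Real.mul_rpow hc.le (Real.rpow_nonneg ha.1.le _)]
    exact Real.rpow_le_rpow (mul_nonneg hc.le (Real.rpow_nonneg ha.1.le _)) (hm a ha) hv.le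
  have hpow : IntegrableOn (fun a => a ^ (-(θ * v))) (Ioo 0 δ) := by
    refine (hint.const_mul (c ^ v)⁻¹).mono' ((continuousOn_id.rpow_const fun a ha =>
      Or.inl ha.1.ne').aestronglyMeasurable measurableSet_Ioo) ?_
    refine ae_restrict_of_forall_mem measurableSet_Ioo fun a ha => ?_
    rw [Real.norm_of_nonneg (Real.rpow_nonneg ha.1.le _)]
    exact hbound a ha
  rw [intervalIntegral.integrableOn_Ioo_rpow_iff hδ] at hpow
  linarith

theorem eq_zero_of_tendsto_mul_of_norm_le_rpow {L : R} {C : ℝ} (hv : 0 < v) (hθv : 1 ≤ θ * v)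
    (hm : IntegrableOn (fun a => ‖m a‖ ^ v) (Ioo 0 1))
    (hu : ∀ a ∈ Ioo (0 : ℝ) 1, ‖u a‖ ≤ C * a ^ θ)
    (hL : Tendsto (fun a => m a * u a) (𝓝[>] 0) (𝓝 L)) : L = 0 := by
  by_contra hL0
  set ε := ‖L‖ / 2
  have hε : 0 < ε := half_pos (norm_pos_iff.2 hL0)
  obtain ⟨δ, hδ, hsub⟩ := (mem_nhdsGT_iff_exists_mem_Ioc_Ioo_subset zero_lt_one).1
    (hL.norm.eventually_const_lt (half_lt_self (norm_pos_iff.2 hL0)))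
  have hlow : ∀ a ∈ Ioo 0 δ, ε < ‖m a‖ * (C * a ^ θ) := fun a ha =>
    (hsub ha).trans_le ((norm_mul_le _ _).trans
      (by gcongr; exact hu a ⟨ha.1, ha.2.trans_le hδ.2⟩))
  have hC : 0 < C := by
    by_contra! hC
    have ha : δ / 2 ∈ Ioo 0 δ := ⟨half_pos hδ.1, half_lt_self hδ.1⟩
    exact (hlow _ ha).not_ge ((mul_nonpos_of_nonneg_of_nonpos (norm_nonneg _)
      (mul_nonpos_of_nonpos_of_nonneg hC (Real.rpow_nonneg ha.1.le _))).trans hε.le)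
  refine not_integrableOn_norm_rpow_of_mul_rpow_neg_le hv hθv (div_pos hε hC) hδ.1
    (fun a ha => ?_) (hm.mono_set (Ioo_subset_Ioo_right hδ.2))
  rw [Real.rpow_neg ha.1.le, ← div_eq_mul_inv, div_div, div_le_iff₀ (by
    have := Real.rpow_pos_of_pos ha.1 θ; positivity)]
  linarith [hlow a ha]

end Singularity

theorem multiplier_ACr_ACp_sufficient_general
    (p r v q : ℝ≥0∞) (hp : 1 < p) (hpr : p < r)
    (hv : v⁻¹ = p⁻¹ - r⁻¹) (hq : r⁻¹ + q⁻¹ = 1)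
    (m m' : ℝ → ℂ)
    (hmv : MemLp m v mu01)
    (hm'meas : Measurable m')
    (hmac : ∀ t ∈ Set.Ioc (0 : ℝ) 1, m t = m 1 - ∫ s in Set.Ioc t 1, m' s)
    (hm'p : ∀ ε ∈ Set.Ioc (0 : ℝ) 1, MemLp ((Set.Icc ε 1).indicator m') p mu01)
    (hsum : ∑' n : ℕ,
        (ENNReal.ofReal ((2 : ℝ) ^ (-((n : ℝ) + 1) * (q⁻¹).toReal)) *
          eLpNorm ((Set.Ioc ((2 : ℝ) ^ (-((n : ℝ) + 1))) ((2 : ℝ) ^ (-(n : ℝ)))).indicator m')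
            p mu01) ^ p.toReal < ⊤) :
    ∀ g g' : ℝ → ℂ, MemLp g' r mu01 →
      (∀ t ∈ Set.Icc (0 : ℝ) 1, g t = ∫ s in Set.Ioc (0 : ℝ) t, g' s) →
      ∃ D : ℝ → ℂ, MemLp D p mu01 ∧
        ∀ t ∈ Set.Icc (0 : ℝ) 1,
          (if t = 0 then 0 else m t * g t) = ∫ s in Set.Ioc (0 : ℝ) t, D s := by
  intro g g' hg' hg
  have hvr : v⁻¹ + r⁻¹ = p⁻¹ := by rw [hv, tsub_add_cancel_of_le (ENNReal.inv_le_inv.2 hpr.le)]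
  have hvT : v ≠ ⊤ := fun hvT => hpr.ne' (inv_inj.1 (by simpa [hvT] using hvr))
  have hθv := one_lt_toReal_inv_mul_toReal hp hvT hvr hq
  have hv0 : v ≠ 0 := by rintro rfl; norm_num at hθv
  have hg'int : IntegrableOn g' (Ioc 0 1) :=
    integrableOn_of_integrable_mu01 (hg'.integrable (hp.trans hpr).le) Ioc_subset_Icc_self
  have hg_le : ∀ s ∈ Ioc (0 : ℝ) 1, ‖g s‖ ≤ (eLpNorm g' r mu01).toReal * s ^ (q⁻¹).toReal :=
    fun s hs => hg s (Ioc_subset_Icc_self hs) ▸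
      norm_setIntegral_Ioc_zero_le_mul_rpow hq hg' (Ioc_subset_Icc_self hs)
  have hg_meas : AEStronglyMeasurable g mu01 :=
    ((continuousOn_setIntegral_Ioc hg'int).congr hg).aestronglyMeasurable measurableSet_Icc
  set D := (Ioc (0 : ℝ) 1).indicator fun s => m' s * g s + m s * g' s
  have hD : MemLp D p mu01 := by
    rw [show D = _ + _ from indicator_add' _ _ _]
    exact (memLp_indicator_Ioc_mul_of_tsum_lt_top (zero_lt_one.trans hp).ne' hpr.ne_top
      ENNReal.toReal_nonneg (hm'meas.aestronglyMeasurable.mul hg_meas) hg_le hsum).add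
      ((hg'.smul hmv (hpqr := ⟨hvr⟩)).indicator measurableSet_Ioc)
  refine ⟨D, hD, fun t ht => ?_⟩
  rcases ht.1.eq_or_lt with rfl | ht0
  · simp
  rw [if_neg ht0.ne']
  have hlim : Tendsto (fun a => m a * g a) (𝓝[>] 0) (𝓝 (m t * g t - ∫ s in Ioc 0 t, D s)) := by
    refine ((tendsto_setIntegral_Ioc_nhdsGT ht0 (integrableOn_of_integrable_mu01
      (hD.integrable hp.le) (Ioc_subset_Icc_self.trans (Icc_subset_Icc_right ht.2)))).const_sub
        _).congr' (eventually_of_mem (Ioo_mem_nhdsGT ht0) fun a ha => ?_)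
    rw [setIntegral_congr_fun (f := D) measurableSet_Ioc fun x hx =>
        indicator_of_mem (Ioc_subset_Ioc ha.1.le ht.2 hx) _,
      ← mul_sub_mul_eq_setIntegral_Ioc hp.le ha.1 ha.2.le ht.2 (hm'p a ⟨ha.1, ha.2.le.trans ht.2⟩)
        hg'int hmac hg, sub_sub_cancel]
  exact sub_eq_zero.1 (eq_zero_of_tendsto_mul_of_norm_le_rpow (ENNReal.toReal_pos hv0 hvT) hθv.le
    (integrableOn_of_integrable_mu01 (hmv.integrable_norm_rpow hv0 hvT) Ioo_subset_Icc_self)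
    (fun a ha => hg_le a (Ioo_subset_Ioc_self ha)) hlim)

/-- Theorem 6, sufficiency for `r > p > 1`.  Let `r > p > 1`,
let `v` satisfy `1/v = 1/p − 1/r` and let `q = r'` be the conjugate exponent of
`r`.  Let `m ∈ L^v(0,1]` be continuous on `(0,1]`, absolutely continuous on each
`[ε,1]` with derivative `m'` satisfying `m'·χ_{[ε,1]} ∈ L^p` and
`Σ_{n≥1} (2^{−n/r'} ‖P_n m'‖_p)^p < ∞`, where `P_n m' = m'·χ_{(2^{−n},2^{−n+1}]}`.
Then for every `g ∈ AC_r` the product `mg` (extended by `(mg)(0) = 0`) belongs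
to `AC_p`: `m` defines a multiplier from `AC_r` to `AC_p`. -/
theorem multiplier_ACr_ACp_sufficient
    (p r v q : ℝ≥0∞) (hp : 1 < p) (hpr : p < r)
    (hv : v⁻¹ = p⁻¹ - r⁻¹) (hq : r⁻¹ + q⁻¹ = 1)
    (m m' : ℝ → ℂ)
    (hmc : ContinuousOn m (Set.Ioc (0 : ℝ) 1))
    (hmv : MemLp m v mu01)
    (hm'meas : Measurable m')
    (hmac : ∀ t ∈ Set.Ioc (0 : ℝ) 1, m t = m 1 - ∫ s in Set.Ioc t 1, m' s)
    (hm'p : ∀ ε ∈ Set.Ioc (0 : ℝ) 1, MemLp ((Set.Icc ε 1).indicator m') p mu01)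
    (hsum : ∑' n : ℕ,
        (ENNReal.ofReal ((2 : ℝ) ^ (-((n : ℝ) + 1) * (q⁻¹).toReal)) *
          eLpNorm ((Set.Ioc ((2 : ℝ) ^ (-((n : ℝ) + 1))) ((2 : ℝ) ^ (-(n : ℝ)))).indicator m')
            p mu01) ^ p.toReal < ⊤) :
    ∀ g g' : ℝ → ℂ, MemLp g' r mu01 →
      (∀ t ∈ Set.Icc (0 : ℝ) 1, g t = ∫ s in Set.Ioc (0 : ℝ) t, g' s) →
      ∃ D : ℝ → ℂ, MemLp D p mu01 ∧
        ∀ t ∈ Set.Icc (0 : ℝ) 1,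
          (if t = 0 then 0 else m t * g t) = ∫ s in Set.Ioc (0 : ℝ) t, D s :=
  multiplier_ACr_ACp_sufficient_general p r v q hp hpr hv hq m m' hmv hm'meas hmac hm'p hsum
end
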